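/- arXiv:2411.06201 — 2 statements merged into one kernel-verified Lean document; each statement's English description precedes it below -/
import Mathlib

section
/- Define $r_0 = 1$, $r_{n+1} = r_n^2 + 1$, and $s_n = (2 r_{n+1} - 1)/(2 r_{n+1})$ for $n \geq 0$. Then the infinite product $\prod_{n=0}^{\infty} s_n$ converges to a value strictly greater than $1/2$. -/
/-! Write `s n = 1 - a n` with `a n = 1 / (2 r (n + 1))`. The partial products decrease, and
`∏ (1 - a n) ≥ 1 - ∑ a n`. The ratio `a (n + 1) / a n = x / (x ^ 2 + 1)` with `x = r (n + 1) ≥ 2`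
is at most `2 / 5`, so `∑ a n ≤ a 0 / (1 - 2 / 5) = 5 / 12` and the limit is at least `7 / 12`. -/

open Filter Finset

theorem Finset.one_sub_sum_le_prod_one_sub {ι R : Type*} [CommRing R] [LinearOrder R]
    [IsStrictOrderedRing R] (t : Finset ι) {a : ι → R} (h0 : ∀ i ∈ t, 0 ≤ a i)
    (h1 : ∀ i ∈ t, a i ≤ 1) : 1 - ∑ i ∈ t, a i ≤ ∏ i ∈ t, (1 - a i) := by
  classical
  induction t using Finset.induction_on with
  | empty => simp
  | insert j t hj ih =>
    rw [sum_insert hj, prod_insert hj]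
    have hP : ∏ i ∈ t, (1 - a i) ≤ 1 :=
      prod_le_one (fun i hi => sub_nonneg.2 (h1 i (mem_insert_of_mem hi)))
        fun i hi => sub_le_self _ (h0 i (mem_insert_of_mem hi))
    have ih := ih (fun i hi => h0 i (mem_insert_of_mem hi)) fun i hi => h1 i (mem_insert_of_mem hi)
    nlinarith [h0 j (mem_insert_self j t), h1 j (mem_insert_self j t)]

theorem tendsto_prod_range_ciInf_of_nonneg_of_le_one {f : ℕ → ℝ} (h0 : ∀ n, 0 ≤ f n)
    (h1 : ∀ n, f n ≤ 1) :
    Tendsto (fun N => ∏ n ∈ range N, f n) atTop (nhds (⨅ N, ∏ n ∈ range N, f n)) := by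
  refine tendsto_atTop_ciInf (antitone_nat_of_succ_le fun N => ?_) ⟨0, ?_⟩
  · rw [prod_range_succ]
    exact mul_le_of_le_one_right (prod_nonneg fun n _ => h0 n) (h1 N)
  · rintro _ ⟨N, rfl⟩
    exact prod_nonneg fun n _ => h0 n

theorem one_sub_mul_sum_range_add_le {R : Type*} [CommRing R] [PartialOrder R]
    [IsOrderedRing R] {a : ℕ → R} {q : R} (h : ∀ n, a (n + 1) ≤ q * a n) (N : ℕ) :
    (1 - q) * ∑ n ∈ range N, a n + a N ≤ a 0 := by
  induction N with
  | zero => simp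
  | succ N ih =>
    rw [sum_range_succ]
    linear_combination ih + h N

section SquarePlusOne

variable {r : ℕ → ℝ} (h0 : r 0 = 1) (hrec : ∀ n, r (n + 1) = r n ^ 2 + 1)
include h0 hrec

theorem one_le_of_eq_sq_add_one (n : ℕ) : 1 ≤ r n := by
  cases n with
  | zero => exact h0.ge
  | succ n => rw [hrec]; nlinarith [sq_nonneg (r n)]

theorem inv_two_mul_succ_le_of_eq_sq_add_one (n : ℕ) :
    1 / (2 * r (n + 2)) ≤ 2 / 5 * (1 / (2 * r (n + 1))) := by
  have hr : 2 ≤ r (n + 1) := by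
    rw [hrec]; nlinarith [one_le_of_eq_sq_add_one h0 hrec n]
  rw [hrec (n + 1), div_le_iff₀ (by positivity)]
  field_simp
  nlinarith

end SquarePlusOne

theorem stmt5 (r : ℕ → ℝ) (h0 : r 0 = 1) (hrec : ∀ n, r (n + 1) = r n ^ 2 + 1)
    (s : ℕ → ℝ) (hs : ∀ n, s n = (2 * r (n + 1) - 1) / (2 * r (n + 1))) :
    ∃ l : ℝ, 1 / 2 < l ∧
      Tendsto (fun N => ∏ n ∈ Finset.range N, s n) atTop (nhds l) := by
  set a : ℕ → ℝ := fun n => 1 / (2 * r (n + 1)) with ha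
  have hr n : 1 ≤ r (n + 1) := one_le_of_eq_sq_add_one h0 hrec (n + 1)
  have hsa : s = fun n => 1 - a n := funext fun n => by
    have := hr n
    rw [hs, ha]; field_simp
  have ha0 n : 0 ≤ a n := by have := hr n; positivity
  have ha1 n : a n ≤ 1 := by
    rw [ha, div_le_one (by linarith [hr n])]; linarith [hr n]
  have hsum N : ∑ n ∈ range N, a n ≤ 5 / 12 := by
    have := one_sub_mul_sum_range_add_le (a := a) (inv_two_mul_succ_le_of_eq_sq_add_one h0 hrec) N
    have hr1 : r 1 = 2 := by rw [hrec, h0]; norm_num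
    simp only [ha, zero_add, hr1] at this
    linarith [ha0 N]
  subst hsa
  refine ⟨_, ?_, tendsto_prod_range_ciInf_of_nonneg_of_le_one (fun n => sub_nonneg.2 (ha1 n))
    fun n => sub_le_self _ (ha0 n)⟩
  calc (1 : ℝ) / 2 < 1 - 5 / 12 := by norm_num
    _ ≤ _ := le_ciInf fun N => (sub_le_sub_left (hsum N) 1).trans
      (one_sub_sum_le_prod_one_sub _ (fun n _ => ha0 n) fun n _ => ha1 n)
end

section
/- Dobrushin's ergodic coefficient is submultiplicative: for column-stochastic matrices $Q_1 \in [0,1]^{B \times C}$ and $Q_2 \in [0,1]^{C \times D}$ (finite index sets), $\delta(Q_1 Q_2) \leq \delta(Q_1)\,\delta(Q_2)$. -/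
/-- Dobrushin's ergodic coefficient: maximal total variation distance between columns. -/
noncomputable def dobrushin {B C : Type*} [Fintype B] [Fintype C] (Q : Matrix B C ℝ) : ℝ :=
  ⨆ i : C, ⨆ j : C, (1 / 2) * ∑ k : B, |Q k i - Q k j|

/-- A matrix is column stochastic if all its columns are probability vectors. -/
def ColStochastic {B C : Type*} [Fintype B] (Q : Matrix B C ℝ) : Prop :=
  (∀ b c, 0 ≤ Q b c) ∧ ∀ c, ∑ b, Q b c = 1

/-!
Write a difference of two columns of `Q₂` as `v = v⁺ - v⁻`; since `∑ v = 0`, both parts have the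
same mass `s`, and `∑ |v| = 2 s`. Then `s • Q₁ v = ∑_{c,d} v⁺_c v⁻_d (Q₁ e_c - Q₁ e_d)` is a
combination, with total weight `s²`, of differences of columns of `Q₁`, each of ℓ¹-norm at most
`2 δ(Q₁)`. Hence `‖Q₁ v‖₁ ≤ δ(Q₁) ‖v‖₁`, and `½ ‖v‖₁ ≤ δ(Q₂)`.
-/

open Finset Matrix

section Dobrushin

variable {B C : Type*} [Fintype B] [Fintype C]

lemma le_dobrushin (Q : Matrix B C ℝ) (i j : C) :
    (1 / 2) * ∑ k, |Q k i - Q k j| ≤ dobrushin Q :=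
  le_ciSup_of_le (Finite.bddAbove_range _) i <|
    le_ciSup (f := fun j ↦ (1 / 2) * ∑ k, |Q k i - Q k j|) (Finite.bddAbove_range _) j

lemma dobrushin_nonneg (Q : Matrix B C ℝ) : 0 ≤ dobrushin Q :=
  Real.iSup_nonneg fun _ ↦ Real.iSup_nonneg fun _ ↦ by positivity

lemma dobrushin_le {Q : Matrix B C ℝ} {x : ℝ} (hx : 0 ≤ x)
    (h : ∀ i j, (1 / 2) * ∑ k, |Q k i - Q k j| ≤ x) : dobrushin Q ≤ x :=
  Real.iSup_le (fun i ↦ Real.iSup_le (h i) hx) hx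

end Dobrushin

section ZeroSum

variable {B C : Type*} [Fintype C] {v : C → ℝ}

lemma sum_negPart_eq_sum_posPart (hv : ∑ c, v c = 0) : ∑ c, (v c)⁻ = ∑ c, (v c)⁺ := by
  have : ∑ c, ((v c)⁺ - (v c)⁻) = 0 := by simpa only [posPart_sub_negPart] using hv
  rw [sum_sub_distrib] at this
  linarith

lemma sum_abs_eq_two_mul_sum_posPart (hv : ∑ c, v c = 0) :
    ∑ c, |v c| = 2 * ∑ c, (v c)⁺ := by
  simp only [← posPart_add_negPart, sum_add_distrib, sum_negPart_eq_sum_posPart hv]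
  ring

lemma sum_posPart_mul_mulVec (Q : Matrix B C ℝ) (hv : ∑ c, v c = 0) (k : B) :
    (∑ c, (v c)⁺) * (Q *ᵥ v) k = ∑ c, ∑ d, (v c)⁺ * (v d)⁻ * (Q k c - Q k d) := by
  have hQv : (Q *ᵥ v) k = ∑ c, (v c)⁺ * Q k c - ∑ d, (v d)⁻ * Q k d := by
    rw [mulVec, dotProduct, ← sum_sub_distrib]
    exact sum_congr rfl fun c _ ↦ by rw [← sub_mul, posPart_sub_negPart, mul_comm]
  calc (∑ c, (v c)⁺) * (Q *ᵥ v) k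
      = (∑ c, (v c)⁺ * Q k c) * ∑ d, (v d)⁻ - (∑ c, (v c)⁺) * ∑ d, (v d)⁻ * Q k d := by
        rw [hQv, sum_negPart_eq_sum_posPart hv]
        ring
    _ = ∑ c, ∑ d, (v c)⁺ * (v d)⁻ * (Q k c - Q k d) := by
        simp only [sum_mul_sum, ← sum_sub_distrib]
        exact sum_congr rfl fun c _ ↦ sum_congr rfl fun d _ ↦ by ring

lemma sum_abs_mulVec_le_dobrushin_mul [Fintype B] (Q : Matrix B C ℝ) (hv : ∑ c, v c = 0) :
    ∑ k, |(Q *ᵥ v) k| ≤ dobrushin Q * ∑ c, |v c| := by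
  have habs := sum_abs_eq_two_mul_sum_posPart hv
  set s := ∑ c, (v c)⁺
  have hs : 0 ≤ s := sum_nonneg fun c _ ↦ posPart_nonneg (v c)
  rw [habs]
  rcases hs.eq_or_lt with hs0 | hspos
  · have hv0 : ∀ c, v c = 0 := by
      rw [← hs0, mul_zero, sum_eq_zero_iff_of_nonneg fun c _ ↦ abs_nonneg (v c)] at habs
      exact fun c ↦ abs_eq_zero.mp (habs c (mem_univ c))
    simp [hv0, mulVec, dotProduct, ← hs0]
  refine le_of_mul_le_mul_left ?_ hspos
  calc s * ∑ k, |(Q *ᵥ v) k|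
      = ∑ k, |∑ c, ∑ d, (v c)⁺ * (v d)⁻ * (Q k c - Q k d)| := by
        rw [mul_sum]
        refine sum_congr rfl fun k _ ↦ ?_
        rw [← sum_posPart_mul_mulVec Q hv, abs_mul, abs_of_nonneg hs]
    _ ≤ ∑ k, ∑ c, ∑ d, (v c)⁺ * (v d)⁻ * |Q k c - Q k d| := by
        gcongr with k
        refine (abs_sum_le_sum_abs _ _).trans (sum_le_sum fun c _ ↦ ?_)
        refine (abs_sum_le_sum_abs _ _).trans (sum_le_sum fun d _ ↦ ?_)
        rw [abs_mul, abs_of_nonneg (mul_nonneg (posPart_nonneg _) (negPart_nonneg _))]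
    _ = ∑ c, ∑ d, (v c)⁺ * (v d)⁻ * ∑ k, |Q k c - Q k d| := by
        rw [sum_comm]
        exact sum_congr rfl fun c _ ↦ by rw [sum_comm]; simp only [mul_sum]
    _ ≤ ∑ c, ∑ d, (v c)⁺ * (v d)⁻ * (2 * dobrushin Q) := by
        gcongr with c _ d
        linarith [le_dobrushin Q c d]
    _ = s * (dobrushin Q * (2 * s)) := by
        simp only [← sum_mul, ← sum_mul_sum, sum_negPart_eq_sum_posPart hv]
        ring

end ZeroSum

theorem stmt6_general {B C D : Type*} [Fintype B] [Fintype C] [Fintype D]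
    (Q1 : Matrix B C ℝ) (Q2 : Matrix C D ℝ)
    (h2 : ColStochastic Q2) :
    dobrushin (Q1 * Q2) ≤ dobrushin Q1 * dobrushin Q2 := by
  refine dobrushin_le (mul_nonneg (dobrushin_nonneg Q1) (dobrushin_nonneg Q2)) fun i j ↦ ?_
  set v : C → ℝ := fun c ↦ Q2 c i - Q2 c j
  have hv : ∑ c, v c = 0 := by simp only [v, sum_sub_distrib, h2.2, sub_self]
  have hcol : ∀ k, (Q1 * Q2) k i - (Q1 * Q2) k j = (Q1 *ᵥ v) k := fun k ↦ by
    simp only [mul_apply, mulVec, dotProduct, v, mul_sub, sum_sub_distrib]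
  calc (1 / 2) * ∑ k, |(Q1 * Q2) k i - (Q1 * Q2) k j|
      ≤ (1 / 2) * (dobrushin Q1 * ∑ c, |v c|) := by
        simp only [hcol]
        gcongr
        exact sum_abs_mulVec_le_dobrushin_mul Q1 hv
    _ = dobrushin Q1 * ((1 / 2) * ∑ c, |Q2 c i - Q2 c j|) := by ring
    _ ≤ dobrushin Q1 * dobrushin Q2 := by
        gcongr
        · exact dobrushin_nonneg Q1
        · exact le_dobrushin Q2 i j

theorem stmt6 {B C D : Type*} [Fintype B] [Fintype C] [Fintype D] [Nonempty C] [Nonempty D]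
    (Q1 : Matrix B C ℝ) (Q2 : Matrix C D ℝ)
    (h1 : ColStochastic Q1) (h2 : ColStochastic Q2) :
    dobrushin (Q1 * Q2) ≤ dobrushin Q1 * dobrushin Q2 :=
  stmt6_general Q1 Q2 h2
end
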